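/- Suppose the regularizer depends only on the transfer functions: there is a functional Ω : (Fin p → (ℝ → ℝ)) → ℝ, and the problems are regularized by Ω₁(β) = Ω(j ↦ (x ↦ Σ_{k=1}^m β_{jk} φ_k(x))) for (P1') and Ω₂(β) = Ω(j ↦ (x ↦ Σ_{k=1}^m β_{jk} ψ_{jk}(x))) for (P2'). Assume the constant function 1 lies in the linear span of φ₁, …, φ_m. If β₁ minimizes F₁(β) = Σ_{i=1}^n ( y_i − Σ_j Σ_k β_{jk} φ_k(X_{ij}) )² + Ω₁(β) over all β satisfying the centering constraints Σ_i Σ_k β_{jk} φ_k(X_{ij}) = 0 for every j, and β₂ minimizes F₂(β) = Σ_{i=1}^n ( y_i − Σ_j Σ_k β_{jk} ψ_{jk}(X_{ij}) )² + Ω₂(β) over all β, then F₁(β₁) ≤ F₂(β₂). -/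

import Mathlib

/-!
Since `1 = ∑ k, c k * φ k`, a centered transfer function `∑ k, b k * (φ k - φ̄ k)` differs from
`∑ k, b k * φ k` by a constant that can be absorbed into the coefficients: it equals
`∑ k, (b k - (∑ k', b k' * φ̄ k') * c k) * φ k` as a function. Applied to `β₂`, this gives
coefficients with the same transfer functions, hence the same fit and the same penalty, and they
satisfy the centering constraints because a centered function has empirical mean zero. So
`F₂(β₂)` is a value of `F₁` on the feasible set, and the minimality of `β₁` concludes.
-/

open Finset

theorem sum_sub_mean_eq_zero {n : ℕ} (f : Fin n → ℝ) :
    ∑ i, (f i - (1 / (n : ℝ)) * ∑ i', f i') = 0 := by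
  rcases Nat.eq_zero_or_pos n with rfl | hn
  · simp
  · rw [sum_sub_distrib, sum_const, card_univ, Fintype.card_fin, nsmul_eq_mul,
      ← mul_assoc, mul_one_div_cancel (by positivity), one_mul, sub_self]

theorem sum_sum_mul_sub_mean_eq_zero {n : ℕ} {ι : Type*} [Fintype ι]
    (g : Fin n → ι → ℝ) (b : ι → ℝ) :
    ∑ i, ∑ k, b k * (g i k - (1 / (n : ℝ)) * ∑ i', g i' k) = 0 := by
  rw [sum_comm]
  simp only [← mul_sum, sum_sub_mean_eq_zero, mul_zero, sum_const_zero]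

section Reparametrization

variable {ι : Type*} [Fintype ι]

def uncenteredCoeffs (c a b : ι → ℝ) : ι → ℝ :=
  fun k => b k - (∑ k', b k' * a k') * c k

theorem sum_uncenteredCoeffs_mul {φ : ι → ℝ → ℝ} {c : ι → ℝ} (hc : ∀ x, ∑ k, c k * φ k x = 1)
    (a b : ι → ℝ) (x : ℝ) :
    ∑ k, uncenteredCoeffs c a b k * φ k x = ∑ k, b k * (φ k x - a k) := by
  have hconst : ∑ k, (∑ k', b k' * a k') * c k * φ k x = ∑ k, b k * a k := by
    simp only [mul_assoc, ← mul_sum, hc, mul_one]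
  simp only [uncenteredCoeffs, sub_mul, mul_sub, sum_sub_distrib, hconst]

end Reparametrization

theorem stmt_8_general (n p m : ℕ)
    (X : Fin n → Fin p → ℝ) (y : Fin n → ℝ) (φ : Fin m → ℝ → ℝ)
    (Ω : (Fin p → ℝ → ℝ) → ℝ)
    (c : Fin m → ℝ) (hc : ∀ x : ℝ, ∑ k, c k * φ k x = 1)
    (β₁ β₂ : Fin p → Fin m → ℝ)
    (hmin₁ : ∀ β : Fin p → Fin m → ℝ,
      (∀ j : Fin p, ∑ i, ∑ k, β j k * φ k (X i j) = 0) →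
      (∑ i, (y i - ∑ j, ∑ k, β₁ j k * φ k (X i j)) ^ 2) +
        Ω (fun j => fun x => ∑ k, β₁ j k * φ k x) ≤
      (∑ i, (y i - ∑ j, ∑ k, β j k * φ k (X i j)) ^ 2) +
        Ω (fun j => fun x => ∑ k, β j k * φ k x)) :
    (∑ i, (y i - ∑ j, ∑ k, β₁ j k * φ k (X i j)) ^ 2) +
      Ω (fun j => fun x => ∑ k, β₁ j k * φ k x) ≤
    (∑ i, (y i - ∑ j, ∑ k, β₂ j k *
        (φ k (X i j) - (1 / (n : ℝ)) * ∑ i', φ k (X i' j))) ^ 2) +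
      Ω (fun j => fun x => ∑ k, β₂ j k *
        (φ k x - (1 / (n : ℝ)) * ∑ i', φ k (X i' j))) := by
  set β : Fin p → Fin m → ℝ :=
    fun j => uncenteredCoeffs c (fun k => (1 / (n : ℝ)) * ∑ i', φ k (X i' j)) (β₂ j)
  have hfeas : ∀ j, ∑ i, ∑ k, β j k * φ k (X i j) = 0 := fun j => by
    simpa only [β, sum_uncenteredCoeffs_mul hc] using
      sum_sum_mul_sub_mean_eq_zero (fun i k => φ k (X i j)) (β₂ j)
  simpa only [β, sum_uncenteredCoeffs_mul hc] using hmin₁ β hfeas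

/-- If the regularizer depends only on the transfer functions
(via a functional `Ω` on `Fin p → (ℝ → ℝ)`), and the constant function 1 lies
in the span of the basis, then the optimal value of the constrained problem
(P1') is at most the optimal value of the unconstrained centered problem (P2'). -/
theorem stmt_8 (n p m : ℕ) (hn : 0 < n)
    (X : Fin n → Fin p → ℝ) (y : Fin n → ℝ) (φ : Fin m → ℝ → ℝ)
    (Ω : (Fin p → ℝ → ℝ) → ℝ)
    (c : Fin m → ℝ) (hc : ∀ x : ℝ, ∑ k, c k * φ k x = 1)
    (β₁ β₂ : Fin p → Fin m → ℝ)
    (hfeas : ∀ j : Fin p, ∑ i, ∑ k, β₁ j k * φ k (X i j) = 0)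
    (hmin₁ : ∀ β : Fin p → Fin m → ℝ,
      (∀ j : Fin p, ∑ i, ∑ k, β j k * φ k (X i j) = 0) →
      (∑ i, (y i - ∑ j, ∑ k, β₁ j k * φ k (X i j)) ^ 2) +
        Ω (fun j => fun x => ∑ k, β₁ j k * φ k x) ≤
      (∑ i, (y i - ∑ j, ∑ k, β j k * φ k (X i j)) ^ 2) +
        Ω (fun j => fun x => ∑ k, β j k * φ k x))
    (hmin₂ : ∀ β : Fin p → Fin m → ℝ,
      (∑ i, (y i - ∑ j, ∑ k, β₂ j k *
          (φ k (X i j) - (1 / (n : ℝ)) * ∑ i', φ k (X i' j))) ^ 2) +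
        Ω (fun j => fun x => ∑ k, β₂ j k *
          (φ k x - (1 / (n : ℝ)) * ∑ i', φ k (X i' j))) ≤
      (∑ i, (y i - ∑ j, ∑ k, β j k *
          (φ k (X i j) - (1 / (n : ℝ)) * ∑ i', φ k (X i' j))) ^ 2) +
        Ω (fun j => fun x => ∑ k, β j k *
          (φ k x - (1 / (n : ℝ)) * ∑ i', φ k (X i' j)))) :
    (∑ i, (y i - ∑ j, ∑ k, β₁ j k * φ k (X i j)) ^ 2) +
      Ω (fun j => fun x => ∑ k, β₁ j k * φ k x) ≤
    (∑ i, (y i - ∑ j, ∑ k, β₂ j k *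
        (φ k (X i j) - (1 / (n : ℝ)) * ∑ i', φ k (X i' j))) ^ 2) +
      Ω (fun j => fun x => ∑ k, β₂ j k *
        (φ k x - (1 / (n : ℝ)) * ∑ i', φ k (X i' j))) :=
  stmt_8_general n p m X y φ Ω c hc β₁ β₂ hmin₁
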